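/- arXiv:2103.17166 — 3 statements merged into one kernel-verified Lean document; each statement's English description precedes it below -/
import Mathlib

section
/- If an ideal I on ω is a hereditary weak P-ideal (i.e., for no B ∉ I does I restricted to B contain an isomorphic copy of Fin⊗Fin), then I is unboring: there is no injection-witnessed copy of BI inside I, equivalently, for every f : ω → ω² there is A ∉ I with f[A] ∈ Fin⊗Fin and f|A constant or finite-to-one. -/
/-! If `B ∉ I` is partitioned into `I`-sets and every subset of `B` meeting each piece finitely
were in `I`, then infinitely many pieces are infinite (else `B ∈ I`), and grouping the pieces
into infinitely many infinite `I`-sets and enumerating each group yields a copy of `Fin ⊗ Fin`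
in `I|B`. So in a hereditary weak P-ideal such partitions have positive selectors. Applied to
the columns of `p : ω → ω²`, or to the fibers of `p` inside one positive column, this gives a
positive `A` with `p[A] ∈ Fin ⊗ Fin` on which `p` is finite-to-one. For `f : ω → ω³`, taking
`p` to be `f` followed by the projection to the first two coordinates makes `f[A] ∈ BI`, so
`f` cannot witness `BI ≤ I`. -/

open Set

/-- The ideal `Fin ⊗ Fin` on `ω²`: sets all but finitely many of whose
vertical sections are finite. -/
def FinFin : Set (Set (ℕ × ℕ)) :=
  {A | {n : ℕ | ¬ ({m : ℕ | (n, m) ∈ A}).Finite}.Finite}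

/-- The `i`-th section of a subset of `ω³`. -/
def BIsec (i : ℕ) (A : Set (ℕ × ℕ × ℕ)) : Set (ℕ × ℕ) := {p | (i, p) ∈ A}

/-- The ideal `BI` on `ω³`. -/
def BI : Set (Set (ℕ × ℕ × ℕ)) :=
  {A | ∃ k : ℕ, (∀ i < k, BIsec i A ∈ FinFin) ∧ ∀ i ≥ k, (BIsec i A).Finite}

/-- `I` is an ideal on `X`: contains all finite sets, closed under subsets and
finite unions, and proper. -/
def IsIdeal {X : Type*} (I : Set (Set X)) : Prop :=
  (∀ A : Set X, A.Finite → A ∈ I) ∧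
  (∀ A B : Set X, A ∈ I → B ⊆ A → B ∈ I) ∧
  (∀ A B : Set X, A ∈ I → B ∈ I → A ∪ B ∈ I) ∧
  (Set.univ : Set X) ∉ I

/-- `I|B` contains an isomorphic copy of `Fin ⊗ Fin`. -/
def FinFinCopyOn (I : Set (Set ℕ)) (B : Set ℕ) : Prop :=
  ∃ g : ℕ → ℕ × ℕ, Set.BijOn g B Set.univ ∧ ∀ C ∈ FinFin, B ∩ g ⁻¹' C ∈ I

/-- `I` is a hereditary weak P-ideal. -/
def HWP (I : Set (Set ℕ)) : Prop := ∀ B : Set ℕ, B ∉ I → ¬ FinFinCopyOn I B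

namespace IsIdeal

variable {X : Type*} {I : Set (Set X)}

theorem finite_mem (hI : IsIdeal I) {A : Set X} (hA : A.Finite) : A ∈ I := hI.1 A hA

theorem mono (hI : IsIdeal I) {A B : Set X} (hA : A ∈ I) (hBA : B ⊆ A) : B ∈ I :=
  hI.2.1 A B hA hBA

theorem union_mem (hI : IsIdeal I) {A B : Set X} (hA : A ∈ I) (hB : B ∈ I) : A ∪ B ∈ I :=
  hI.2.2.1 A B hA hB

theorem univ_notMem (hI : IsIdeal I) : (univ : Set X) ∉ I := hI.2.2.2

theorem biUnion_mem (hI : IsIdeal I) {s : Set ℕ} (hs : s.Finite) {f : ℕ → Set X}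
    (hf : ∀ n ∈ s, f n ∈ I) : ⋃ n ∈ s, f n ∈ I := by
  induction s, hs using Set.Finite.induction_on with
  | empty => simpa using hI.finite_mem finite_empty
  | insert _ _ ih =>
    rw [biUnion_insert]
    exact hI.union_mem (hf _ (mem_insert _ _)) (ih fun n hn => hf n (mem_insert_of_mem _ hn))

end IsIdeal

theorem mem_finFin_of_finite_sections_outside {C : Set (ℕ × ℕ)} {s : Set ℕ} (hs : s.Finite)
    (h : ∀ n ∉ s, {m : ℕ | (n, m) ∈ C}.Finite) : C ∈ FinFin :=
  hs.subset fun n hn => by_contra fun hns => hn (h n hns)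

theorem Set.Finite.mem_finFin {C : Set (ℕ × ℕ)} (hC : C.Finite) : C ∈ FinFin :=
  mem_finFin_of_finite_sections_outside finite_empty fun n _ =>
    (hC.image Prod.snd).subset fun m hm => ⟨(n, m), hm, rfl⟩

theorem mem_BI_of_sections {X : Set (ℕ × ℕ × ℕ)} (hsec : ∀ i, BIsec i X ∈ FinFin)
    (hfin : {i | (BIsec i X).Infinite}.Finite) : X ∈ BI := by
  obtain ⟨k, hk⟩ := hfin.bddAbove
  exact ⟨k + 1, fun i _ => hsec i,
    fun i hi => not_infinite.1 fun hinf => absurd (hk hinf) (by omega)⟩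

theorem mem_BI_of_image_mem_finFin {X : Set (ℕ × ℕ × ℕ)}
    (himage : (fun a => (a.1, a.2.1)) '' X ∈ FinFin)
    (hfib : ∀ i m, {r | (i, m, r) ∈ X}.Finite) : X ∈ BI := by
  refine mem_BI_of_sections
    (fun i => mem_finFin_of_finite_sections_outside finite_empty fun m _ => hfib i m)
    (himage.subset fun i hi hfin => hi ?_)
  refine ((hfin.biUnion fun m _ => (finite_singleton m).prod (hfib i m)).subset ?_)
  rintro ⟨m, r⟩ hmr
  exact mem_biUnion (x := m) ⟨(i, m, r), hmr, rfl⟩ ⟨rfl, hmr⟩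

theorem mem_BI_fst_snd_eq (i m : ℕ) : {a : ℕ × ℕ × ℕ | a.1 = i ∧ a.2.1 = m} ∈ BI := by
  refine mem_BI_of_sections (fun j => mem_finFin_of_finite_sections_outside (finite_singleton m)
    fun n hn => ?_) ((finite_singleton i).subset fun j hj => ?_)
  · refine finite_empty.subset fun r hr => hn hr.2
  · by_contra hji
    exact hj (finite_empty.subset fun p hp => hji hp.1)

/-- The copy sends the `m`-th element of the fiber `B ∩ c⁻¹{k}` to `(k, m)`. -/
theorem finFinCopyOn_of_fibers {I : Set (Set ℕ)} (hI : IsIdeal I) {B : Set ℕ} (c : ℕ → ℕ)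
    (hinf : ∀ k, (B ∩ c ⁻¹' {k}).Infinite) (hmem : ∀ k, B ∩ c ⁻¹' {k} ∈ I)
    (hsmall : ∀ A ⊆ B, (∀ k, (A ∩ c ⁻¹' {k}).Finite) → A ∈ I) : FinFinCopyOn I B := by
  classical
  set F : ℕ → Set ℕ := fun k => B ∩ c ⁻¹' {k}
  set g : ℕ → ℕ × ℕ := fun x => (c x, Nat.count (· ∈ F (c x)) x)
  have hnth : ∀ x ∈ B, Nat.nth (· ∈ F (g x).1) (g x).2 = x :=
    fun x hx => Nat.nth_count ⟨hx, rfl⟩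
  refine ⟨g, ⟨fun _ _ => mem_univ _, fun x hx y hy hxy => ?_, fun ⟨k, m⟩ _ => ?_⟩,
    fun C hC => ?_⟩
  · rw [← hnth x hx, ← hnth y hy, hxy]
  · have hx : Nat.nth (· ∈ F k) m ∈ F k := Nat.nth_mem_of_infinite (hinf k) m
    refine ⟨_, hx.1, ?_⟩
    simp only [g, show c (Nat.nth (· ∈ F k) m) = k from hx.2,
      Nat.count_nth_of_infinite (p := (· ∈ F k)) (hinf k)]
  · set T := {k | ¬ {m | (k, m) ∈ C}.Finite}
    have hD : B ∩ g ⁻¹' C ∩ c ⁻¹' Tᶜ ∈ I := by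
      refine hsmall _ (fun x hx => hx.1.1) fun k => ?_
      by_cases hk : k ∈ T
      · exact finite_empty.subset fun x hx => hx.1.2 (hx.2.symm ▸ hk)
      · refine ((not_not.1 hk).image (Nat.nth (· ∈ F k))).subset ?_
        rintro x ⟨⟨⟨hxB, hxC⟩, -⟩, hxk⟩
        refine ⟨(g x).2, ?_, ?_⟩
        · simpa [g, show c x = k from hxk] using hxC
        · rw [← show c x = k from hxk]; exact hnth x hxB
    refine hI.mono (hI.union_mem hD (hI.biUnion_mem hC fun k _ => hmem k)) fun x hx => ?_
    by_cases hxT : c x ∈ T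
    · exact Or.inr (mem_biUnion hxT ⟨hx.1, rfl⟩)
    · exact Or.inl ⟨hx, hxT⟩

theorem HWP.exists_subset_notMem_finite_inter_fibers {I : Set (Set ℕ)} (hI : IsIdeal I)
    (h : HWP I) {B : Set ℕ} (hB : B ∉ I) (q : ℕ → ℕ) (hq : ∀ n, B ∩ q ⁻¹' {n} ∈ I) :
    ∃ A ⊆ B, A ∉ I ∧ ∀ n, (A ∩ q ⁻¹' {n}).Finite := by
  classical
  by_contra! hcon
  have hsmall : ∀ A ⊆ B, (∀ n, (A ∩ q ⁻¹' {n}).Finite) → A ∈ I := fun A hAB hfin =>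
    by_contra fun hA => absurd (hfin _) (hcon A hAB hA).choose_spec
  set S := {n | (B ∩ q ⁻¹' {n}).Infinite}
  by_cases hS : S.Finite
  · have hR : B ∩ q ⁻¹' Sᶜ ∈ I := hsmall _ inter_subset_left fun n => by
      by_cases hn : n ∈ S
      · exact finite_empty.subset fun x hx => hx.1.2 (hx.2.symm ▸ hn)
      · exact (not_infinite.1 hn).subset fun x hx => ⟨hx.1.1, hx.2⟩
    refine hB (hI.mono (hI.union_mem hR (hI.biUnion_mem hS fun n _ => hq n)) fun x hx => ?_)
    by_cases hqx : q x ∈ S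
    · exact Or.inr (mem_biUnion hqx ⟨hx, rfl⟩)
    · exact Or.inl ⟨hx, hqx⟩
  -- Group `k` consists of the fibers between the `k-1`-st and the `k`-th infinite one.
  set c : ℕ → ℕ := fun x => Nat.count (· ∈ S) (q x)
  have hgroup : ∀ k, B ∩ c ⁻¹' {k} = ⋃ n ∈ {n | Nat.count (· ∈ S) n = k}, B ∩ q ⁻¹' {n} := by
    intro k; ext x; simp [c]
  refine h B hB (finFinCopyOn_of_fibers hI c (fun k => ?_) (fun k => ?_) fun A hAB hfin => ?_)
  · refine (Nat.nth_mem_of_infinite (p := (· ∈ S)) hS k).mono ?_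
    rw [hgroup]
    exact subset_biUnion_of_mem (u := fun n => B ∩ q ⁻¹' {n})
      (Nat.count_nth_of_infinite (p := (· ∈ S)) hS k)
  · rw [hgroup]
    refine hI.biUnion_mem ((finite_Iic (Nat.nth (· ∈ S) k)).subset fun n hn => ?_)
      fun n _ => hq n
    exact (Nat.le_nth_count (p := (· ∈ S)) hS n).trans_eq (congrArg _ hn)
  · exact hsmall A hAB fun n => (hfin (Nat.count (· ∈ S) n)).subset
      fun x hx => ⟨hx.1, congrArg (Nat.count (· ∈ S)) hx.2⟩

theorem HWP.exists_notMem_image_mem_finFin {I : Set (Set ℕ)} (hI : IsIdeal I) (h : HWP I)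
    (p : ℕ → ℕ × ℕ) (hp : ∀ y, p ⁻¹' {y} ∈ I) :
    ∃ A ∉ I, p '' A ∈ FinFin ∧ ∀ y, (A ∩ p ⁻¹' {y}).Finite := by
  by_cases hcol : ∃ i, (fun x => (p x).1) ⁻¹' {i} ∉ I
  · obtain ⟨i, hi⟩ := hcol
    obtain ⟨A, hAi, hA, hfin⟩ := h.exists_subset_notMem_finite_inter_fibers hI hi
      (fun x => (p x).2) fun m => hI.mono (hp (i, m)) fun x hx => Prod.ext hx.1 hx.2
    refine ⟨A, hA, mem_finFin_of_finite_sections_outside (finite_singleton i) fun n hn => ?_,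
      fun y => (hfin y.2).subset fun x hx => ⟨hx.1, congrArg Prod.snd hx.2⟩⟩
    refine finite_empty.subset ?_
    rintro m ⟨x, hxA, hxnm⟩
    exact hn ((congrArg Prod.fst hxnm).symm.trans (hAi hxA))
  · push Not at hcol
    obtain ⟨A, -, hA, hfin⟩ := h.exists_subset_notMem_finite_inter_fibers hI hI.univ_notMem
      (fun x => (p x).1) fun i => by simpa using hcol i
    refine ⟨A, hA, mem_finFin_of_finite_sections_outside finite_empty fun n _ => ?_,
      fun y => (hfin y.1).subset fun x hx => ⟨hx.1, congrArg Prod.fst hx.2⟩⟩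
    refine ((hfin n).image fun x => (p x).2).subset ?_
    rintro m ⟨x, hxA, hxnm⟩
    exact ⟨x, ⟨hxA, congrArg Prod.fst hxnm⟩, congrArg Prod.snd hxnm⟩

theorem stmt_7 (I : Set (Set ℕ)) (hI : IsIdeal I) (h : HWP I) :
    (¬ ∃ f : ℕ → ℕ × ℕ × ℕ, Function.Injective f ∧ ∀ A ∈ BI, f ⁻¹' A ∈ I) ∧
    (∀ f : ℕ → ℕ × ℕ, ∃ A : Set ℕ, A ∉ I ∧ f '' A ∈ FinFin ∧
      ((∃ c, ∀ n ∈ A, f n = c) ∨ ∀ p : ℕ × ℕ, (A ∩ f ⁻¹' {p}).Finite)) := by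
  refine ⟨fun ⟨f, _, hf⟩ => ?_, fun f => ?_⟩
  · set p : ℕ → ℕ × ℕ := fun x => ((f x).1, (f x).2.1)
    obtain ⟨A, hA, himage, hfin⟩ := h.exists_notMem_image_mem_finFin hI p fun ⟨i, m⟩ =>
      hI.mono (hf _ (mem_BI_fst_snd_eq i m))
        fun x hx => ⟨congrArg Prod.fst hx, congrArg Prod.snd hx⟩
    refine hA (hI.mono (hf _ (mem_BI_of_image_mem_finFin ?_ fun i m => ?_))
      (subset_preimage_image f A))
    · rwa [image_image]
    · refine ((hfin (i, m)).image fun x => (f x).2.2).subset ?_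
      rintro r ⟨x, hxA, hx⟩
      exact ⟨x, ⟨hxA, by simp [p, hx]⟩, by simp [hx]⟩
  · by_cases hfib : ∃ y, f ⁻¹' {y} ∉ I
    · obtain ⟨y, hy⟩ := hfib
      exact ⟨_, hy, ((finite_singleton y).subset (image_preimage_subset f _)).mem_finFin,
        Or.inl ⟨y, fun _ hn => hn⟩⟩
    · push Not at hfib
      obtain ⟨A, hA, himage, hfin⟩ := h.exists_notMem_image_mem_finFin hI f hfib
      exact ⟨A, hA, himage, Or.inr hfin⟩
end

section
/- An ideal I on ω contains an isomorphic copy of Fin⊗Fin if and only if FinBW(I) coincides with the class of finite Hausdorff spaces; in particular if Fin⊗Fin ⊑ I then no infinite Hausdorff space is in FinBW(I), and if Fin⊗Fin ⋢ I then the convergent sequence space {0} ∪ {1/(n+1) : n ∈ ω} ⊆ ℝ is an infinite member of FinBW(I). -/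
open Set

/-- A Hausdorff space is *boring* if it is sequentially compact and some finite
set receives the limits of all injective convergent sequences. -/
def Boring (X : Type*) [TopologicalSpace X] : Prop :=
  SeqCompactSpace X ∧ ∃ F : Finset X, ∀ (x : ℕ → X) (l : X),
    Function.Injective x → Filter.Tendsto x Filter.atTop (nhds l) → l ∈ F

/-- The sequence `(x n)_{n ∈ A}` converges to `l`. -/
def ConvAlong {X : Type*} [TopologicalSpace X] (A : Set ℕ) (x : ℕ → X) (l : X) : Prop :=
  ∀ U ∈ nhds l, {n ∈ A | x n ∉ U}.Finite

/-- `X ∈ FinBW(I)`: every sequence converges along some `I`-positive index set. -/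
def FinBW (I : Set (Set ℕ)) (X : Type*) [TopologicalSpace X] : Prop :=
  ∀ x : ℕ → X, ∃ A : Set ℕ, A ∉ I ∧ ∃ l : X, ConvAlong A x l

universe u

/-!
If a bijection `f : ω → ω²` pulls `Fin ⊗ Fin` into `I` and `z` enumerates distinct points of an
infinite Hausdorff space, then `n ↦ z (f n).1` cannot converge along an `I`-positive set `A`:
`f[A] ∉ Fin ⊗ Fin`, so `f[A]` meets infinitely many columns infinitely, and the limit would have
to equal `z j` for each of them.

If `Fin ⊗ Fin ⋢ I`, take a sequence in `{0} ∪ {1/(n+1)}`. Either one of its fibers is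
`I`-positive, or all are in `I`; then some `I`-positive set meets every fiber finitely, and along
it the sequence tends to `0`, since every neighbourhood of `0` is cofinite. Such a set exists
because otherwise the fibers regroup into infinitely many infinite `I`-pieces, and enumerating
the `j`-th piece onto the `j`-th column of `ω²` embeds `Fin ⊗ Fin` into `I`.
-/

open Filter Topology Function

section Development

variable {α X Y : Type*} {I : Set (Set ℕ)}

namespace IsIdeal

theorem biUnion_mem_s18 (hI : IsIdeal I) {ι : Type*} {s : Set ι} (hs : s.Finite) {A : ι → Set ℕ}
    (hA : ∀ i ∈ s, A i ∈ I) : (⋃ i ∈ s, A i) ∈ I := by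
  induction s, hs using Set.Finite.induction_on with
  | empty => simpa using hI.1 ∅ finite_empty
  | insert _ _ ih =>
    rw [biUnion_insert]
    exact hI.2.2.1 _ _ (hA _ (mem_insert _ _)) (ih fun i hi => hA i (mem_insert_of_mem _ hi))

theorem preimage_mem (hI : IsIdeal I) {p : ℕ → α} {s : Set α} (hs : s.Finite)
    (hp : ∀ a ∈ s, p ⁻¹' {a} ∈ I) : p ⁻¹' s ∈ I := by
  rw [← biUnion_preimage_singleton]
  exact hI.biUnion_mem_s18 hs hp

theorem exists_preimage_singleton_notMem [Finite α] (hI : IsIdeal I) (p : ℕ → α) :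
    ∃ a, p ⁻¹' {a} ∉ I := by
  by_contra! h
  exact hI.2.2.2 (by simpa using hI.preimage_mem finite_univ fun a _ => h a)

end IsIdeal

def ContainsFinFinCopy (I : Set (Set ℕ)) : Prop :=
  ∃ f : ℕ → ℕ × ℕ, Bijective f ∧ ∀ C ∈ FinFin, f ⁻¹' C ∈ I

theorem exists_bijective_fst_eq {c : ℕ → ℕ} (hc : ∀ j, (c ⁻¹' {j}).Infinite) :
    ∃ f : ℕ → ℕ × ℕ, Bijective f ∧ ∀ n, (f n).1 = c n := by
  have e : ∀ j, {n // c n = j} ≃ ℕ := fun j =>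
    haveI : Infinite {n // c n = j} := (hc j).to_subtype
    @Denumerable.eqv _ (nonempty_denumerable _).some
  let f := (Equiv.sigmaFiberEquiv c).symm.trans
    ((Equiv.sigmaCongrRight e).trans (Equiv.sigmaEquivProd ℕ ℕ))
  exact ⟨f, f.bijective, fun n => rfl⟩

theorem preimage_mem_of_finFin (hI : IsIdeal I) {f : ℕ → ℕ × ℕ} (hf : Injective f) {c : ℕ → ℕ}
    (hfc : ∀ n, (f n).1 = c n) (hc : ∀ j, c ⁻¹' {j} ∈ I)
    (hsmall : ∀ A : Set ℕ, (∀ j, (A ∩ c ⁻¹' {j}).Finite) → A ∈ I)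
    {C : Set (ℕ × ℕ)} (hC : C ∈ FinFin) : f ⁻¹' C ∈ I := by
  set T := {j | ¬ {m | (j, m) ∈ C}.Finite}
  have hcols : c ⁻¹' T ∈ I := hI.preimage_mem hC fun j _ => hc j
  have hrest : f ⁻¹' C \ c ⁻¹' T ∈ I := by
    refine hsmall _ fun j => ?_
    by_cases hj : j ∈ T
    · exact finite_empty.subset fun n ⟨⟨_, hnT⟩, hn⟩ => hnT (by rwa [mem_preimage, hn])
    · refine (((finite_singleton j).prod (not_not.mp hj)).preimage hf.injOn).subset ?_
      rintro n ⟨⟨hnC, -⟩, hn⟩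
      rw [mem_preimage, mem_singleton_iff, ← hfc] at hn
      exact ⟨hn, by rwa [← hn]⟩
  exact hI.2.1 _ _ (hI.2.2.1 _ _ hcols hrest) fun n hn => (em _).imp id fun h => ⟨hn, h⟩

theorem Nat.finite_count_preimage_singleton {S : Set ℕ} [DecidablePred (· ∈ S)] (hS : S.Infinite)
    (j : ℕ) : (Nat.count (· ∈ S) ⁻¹' {j}).Finite :=
  (finite_Iic (Nat.nth (· ∈ S) j)).subset fun _ hk =>
    (Nat.count_le_iff_le_nth (p := (· ∈ S)) hS).mp hk.le

/-- With `S` the infinite fibers of `p`, the `j`-th fiber of `Nat.count S ∘ p` is the preimage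
of a finite interval containing exactly one point of `S`. -/
theorem exists_partition_infinite_fibers (hI : IsIdeal I) {p : ℕ → ℕ} (hp : ∀ k, p ⁻¹' {k} ∈ I)
    (hsmall : ∀ A : Set ℕ, (∀ k, (A ∩ p ⁻¹' {k}).Finite) → A ∈ I) :
    ∃ c : ℕ → ℕ, (∀ j, (c ⁻¹' {j}).Infinite) ∧ (∀ j, c ⁻¹' {j} ∈ I) ∧
      ∀ A : Set ℕ, (∀ j, (A ∩ c ⁻¹' {j}).Finite) → A ∈ I := by
  classical
  set S := {k | (p ⁻¹' {k}).Infinite}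
  have hR : p ⁻¹' Sᶜ ∈ I := hsmall _ fun k => by
    by_cases hk : k ∈ S
    · exact finite_empty.subset fun n ⟨hn, hnk⟩ => hn (by rwa [eq_of_mem_singleton hnk])
    · exact (not_infinite.mp hk).subset inter_subset_right
  have hS : S.Infinite := fun hS => hI.2.2.2 <| by
    simpa [← preimage_union] using hI.2.2.1 _ _ hR (hI.preimage_mem hS fun k _ => hp k)
  refine ⟨fun n => Nat.count (· ∈ S) (p n), fun j => ?_, fun j => ?_,
    fun A hA => hsmall A fun k => ?_⟩
  · refine (Nat.nth_mem_of_infinite (p := (· ∈ S)) hS j).mono fun n hn => ?_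
    exact mem_singleton_iff.mpr
      ((congrArg _ (eq_of_mem_singleton hn)).trans (Nat.count_nth_of_infinite hS j))
  · exact hI.preimage_mem (p := p) (Nat.finite_count_preimage_singleton hS j) fun k _ => hp k
  · exact (hA (Nat.count (· ∈ S) k)).subset fun n ⟨hnA, hn⟩ => ⟨hnA, by simp_all⟩

theorem containsFinFinCopy_of_forall_finite_inter_fiber (hI : IsIdeal I) {p : ℕ → ℕ}
    (hp : ∀ k, p ⁻¹' {k} ∈ I) (hsmall : ∀ A : Set ℕ, (∀ k, (A ∩ p ⁻¹' {k}).Finite) → A ∈ I) :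
    ContainsFinFinCopy I := by
  obtain ⟨c, hinf, hc, hcsmall⟩ := exists_partition_infinite_fibers hI hp hsmall
  obtain ⟨f, hf, hfc⟩ := exists_bijective_fst_eq hinf
  exact ⟨f, hf, fun C hC => preimage_mem_of_finFin hI hf.1 hfc hc hcsmall hC⟩

theorem exists_notMem_forall_finite_inter_fiber [Countable α] (hI : IsIdeal I)
    (hno : ¬ContainsFinFinCopy I) {p : ℕ → α} (hp : ∀ a, p ⁻¹' {a} ∈ I) :
    ∃ A ∉ I, ∀ a, (A ∩ p ⁻¹' {a}).Finite := by
  obtain ⟨e, he⟩ := Countable.exists_injective_nat α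
  by_contra! h
  refine hno (containsFinFinCopy_of_forall_finite_inter_fiber hI (p := e ∘ p)
    (fun k => hI.preimage_mem (p := p) ((finite_singleton k).preimage he.injOn) fun a _ => hp a)
    fun A hA => ?_)
  by_contra hAI
  obtain ⟨a, ha⟩ := h A hAI
  exact ha ((hA (e a)).subset fun n ⟨hnA, hn⟩ => ⟨hnA, congrArg e hn⟩)

section ConvAlong

variable [TopologicalSpace X]

theorem convAlong_preimage_singleton (x : ℕ → X) (v : X) : ConvAlong (x ⁻¹' {v}) x v :=
  fun _ hU => finite_empty.subset fun _ ⟨hn, hnU⟩ =>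
    hnU (by rw [eq_of_mem_singleton hn]; exact mem_of_mem_nhds hU)

theorem convAlong_of_finite_inter_fiber {l : X} (hl : cofinite ≤ 𝓝 l) {x : ℕ → X} {A : Set ℕ}
    (hA : ∀ v, (A ∩ x ⁻¹' {v}).Finite) : ConvAlong A x l := fun _ hU =>
  ((mem_cofinite.mp (hl hU)).biUnion fun v _ => hA v).subset fun _ ⟨hnA, hnU⟩ =>
    mem_biUnion hnU ⟨hnA, rfl⟩

theorem ConvAlong.eq_of_infinite [T1Space X] {A : Set ℕ} {x : ℕ → X} {l v : X}
    (h : ConvAlong A x l) (hv : {n ∈ A | x n = v}.Infinite) : v = l := by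
  by_contra hne
  exact hv ((h _ (isOpen_compl_singleton.mem_nhds (Ne.symm hne))).subset
    fun n ⟨hnA, hn⟩ => ⟨hnA, not_not.mpr hn⟩)

end ConvAlong

section FinBW

variable [TopologicalSpace X] [TopologicalSpace Y]

theorem finBW_of_finite [Finite X] (hI : IsIdeal I) : FinBW I X := fun x =>
  let ⟨v, hv⟩ := hI.exists_preimage_singleton_notMem x
  ⟨_, hv, v, convAlong_preimage_singleton x v⟩

theorem finBW_of_cofinite_le_nhds [Countable X] (hI : IsIdeal I) (hno : ¬ContainsFinFinCopy I)
    {l : X} (hl : cofinite ≤ 𝓝 l) : FinBW I X := by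
  intro x
  by_cases h : ∃ v, x ⁻¹' {v} ∉ I
  · obtain ⟨v, hv⟩ := h
    exact ⟨_, hv, v, convAlong_preimage_singleton x v⟩
  · push Not at h
    obtain ⟨A, hA, hAfin⟩ := exists_notMem_forall_finite_inter_fiber hI hno h
    exact ⟨A, hA, l, convAlong_of_finite_inter_fiber hl hAfin⟩

theorem FinBW.of_surjective {f : X → Y} (hf : Continuous f) (hs : Surjective f)
    (h : FinBW I X) : FinBW I Y := by
  intro y
  obtain ⟨A, hA, l, hl⟩ := h (surjInv hs ∘ y)
  refine ⟨A, hA, f l, fun U hU => (hl _ (hf.continuousAt hU)).subset ?_⟩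
  rintro n ⟨hnA, hnU⟩
  exact ⟨hnA, by simpa [surjInv_eq hs] using hnU⟩

theorem finite_of_finBW [T1Space X] (hI : ContainsFinFinCopy I) (h : FinBW I X) : Finite X := by
  obtain ⟨f, hf, hfI⟩ := hI
  by_contra hX
  have : Infinite X := not_finite_iff_infinite.mp hX
  let z := Infinite.natEmbedding X
  obtain ⟨A, hA, l, hl⟩ := h fun n => z (f n).1
  set T := {j | ¬ {m | (j, m) ∈ f '' A}.Finite}
  have hT : T.Infinite := fun hT => hA (by simpa [preimage_image_eq A hf.1] using hfI _ hT)
  have hlim : ∀ j ∈ T, z j = l := fun j hj => hl.eq_of_infinite fun hfin => hj <|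
    (hfin.image fun n => (f n).2).subset fun _ ⟨n, hnA, hn⟩ =>
      ⟨n, ⟨hnA, by simp [hn]⟩, by simp [hn]⟩
  obtain ⟨j₁, hj₁, j₂, hj₂, hne⟩ := hT.nontrivial
  exact hne (z.injective ((hlim j₁ hj₁).trans (hlim j₂ hj₂).symm))

end FinBW

def convergentSeqSpace : Set ℝ := insert 0 (range fun n : ℕ => 1 / ((n : ℝ) + 1))

theorem infinite_convergentSeqSpace : convergentSeqSpace.Infinite := by
  refine (infinite_range_of_injective fun a b h => ?_).mono (subset_insert _ _)
  simpa using h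

theorem countable_convergentSeqSpace : convergentSeqSpace.Countable :=
  (countable_range _).insert 0

theorem cofinite_le_nhds_zero_convergentSeqSpace :
    cofinite ≤ 𝓝 (⟨0, mem_insert _ _⟩ : convergentSeqSpace) := by
  intro U hU
  let y : ℕ → convergentSeqSpace := fun n => ⟨1 / ((n : ℝ) + 1), mem_insert_of_mem _ ⟨n, rfl⟩⟩
  have hy : Tendsto y atTop (𝓝 ⟨0, mem_insert _ _⟩) :=
    tendsto_subtype_rng.mpr tendsto_one_div_add_atTop_nhds_zero_nat
  have hfin : (y ⁻¹' U)ᶜ.Finite := by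
    rw [← mem_cofinite, Nat.cofinite_eq_atTop]; exact hy hU
  refine mem_cofinite.mpr ((hfin.image y).subset ?_)
  rintro ⟨w, rfl | ⟨n, rfl⟩⟩ hwU
  · exact absurd (mem_of_mem_nhds hU) hwU
  · exact ⟨n, hwU, rfl⟩

end Development

theorem stmt_18 (I : Set (Set ℕ)) (hI : IsIdeal I) :
    ((∃ f : ℕ → ℕ × ℕ, Function.Bijective f ∧ ∀ C ∈ FinFin, f ⁻¹' C ∈ I) ↔
      ∀ (X : Type u) [TopologicalSpace X] [T2Space X], (FinBW I X ↔ Finite X)) ∧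
    ((∃ f : ℕ → ℕ × ℕ, Function.Bijective f ∧ ∀ C ∈ FinFin, f ⁻¹' C ∈ I) →
      ∀ (X : Type u) [TopologicalSpace X] [T2Space X], FinBW I X → Finite X) ∧
    ((¬ ∃ f : ℕ → ℕ × ℕ, Function.Bijective f ∧ ∀ C ∈ FinFin, f ⁻¹' C ∈ I) →
      Infinite ↥(insert (0 : ℝ) (Set.range fun n : ℕ => 1 / ((n : ℝ) + 1))) ∧
      FinBW I ↥(insert (0 : ℝ) (Set.range fun n : ℕ => 1 / ((n : ℝ) + 1)))) := by
  have hcopy : ContainsFinFinCopy I → ∀ (X : Type u) [TopologicalSpace X] [T2Space X],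
      FinBW I X → Finite X := fun h _ _ _ => finite_of_finBW h
  have hno : ¬ContainsFinFinCopy I →
      Infinite convergentSeqSpace ∧ FinBW I convergentSeqSpace := fun h =>
    haveI := countable_convergentSeqSpace.to_subtype
    ⟨infinite_convergentSeqSpace.to_subtype,
      finBW_of_cofinite_le_nhds hI h cofinite_le_nhds_zero_convergentSeqSpace⟩
  refine ⟨⟨fun h X _ _ => ⟨hcopy h X, fun _ => finBW_of_finite hI⟩, fun hall => ?_⟩, hcopy, hno⟩
  by_contra h
  obtain ⟨hinf, hBW⟩ := hno h
  have := (hall (ULift.{u} convergentSeqSpace)).mp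
    (hBW.of_surjective continuous_uliftUp ULift.up_surjective)
  exact not_finite_iff_infinite.mpr hinf (Finite.of_equiv _ Equiv.ulift)
end

section
/- An ideal I on ω is not tall if and only if FinBW(I) coincides with the class of sequentially compact Hausdorff spaces; in particular, if there is an infinite B ⊆ ω such that every subset of B lying in I is finite, then every sequentially compact Hausdorff space is in FinBW(I). -/
open Set

universe u

/-!
If some infinite `B` has only finite subsets in `I`, a convergent subsequence of `(xₙ)_{n ∈ B}`
is indexed by an `I`-positive set, so sequentially compact spaces lie in `FinBW(I)`; conversely
`I`-positive sets are infinite, so `FinBW(I)` spaces are sequentially compact. If `I` is tall,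
Zorn's lemma gives a maximal almost disjoint family `F ⊆ I`. The one-point compactification of
Mrówka's space `Ψ(F)` is sequentially compact Hausdorff, but the sequence of isolated points
`n ∈ ω` converges along no `I`-positive set: a limit `A ∈ F` forces the index set into `A ∪ fin`,
and the limit `∞` is excluded by maximality of `F`.
-/

open Filter Topology

section ConvAlong

variable {X Y : Type*} [TopologicalSpace X] [TopologicalSpace Y] {A B : Set ℕ} {x : ℕ → X}
  {l : X}

theorem eventually_cofinite_inf_principal {α : Type*} {s : Set α} {p : α → Prop} :
    (∀ᶠ a in cofinite ⊓ 𝓟 s, p a) ↔ {a ∈ s | ¬ p a}.Finite := by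
  simp only [eventually_inf_principal, eventually_cofinite, Classical.not_imp]

theorem convAlong_iff_tendsto : ConvAlong A x l ↔ Tendsto x (cofinite ⊓ 𝓟 A) (𝓝 l) := by
  simp only [ConvAlong, tendsto_iff_forall_eventually_mem, eventually_cofinite_inf_principal]

theorem convAlong_of_eqOn (h : EqOn x (fun _ ↦ l) A) : ConvAlong A x l :=
  convAlong_iff_tendsto.2 <| tendsto_nhds_of_eventually_eq <|
    eventually_inf_principal.2 (Eventually.of_forall h)

theorem ConvAlong.map {f : X → Y} (hf : Continuous f) (h : ConvAlong A x l) :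
    ConvAlong A (f ∘ x) (f l) :=
  convAlong_iff_tendsto.2 ((hf.tendsto l).comp (convAlong_iff_tendsto.1 h))

theorem ConvAlong.exists_strictMono_tendsto (hA : A.Infinite) (h : ConvAlong A x l) :
    ∃ φ : ℕ → ℕ, StrictMono φ ∧ Tendsto (x ∘ φ) atTop (𝓝 l) := by
  refine ⟨Nat.nth (· ∈ A), Nat.nth_strictMono hA, (convAlong_iff_tendsto.1 h).comp ?_⟩
  refine tendsto_inf.2 ⟨?_, tendsto_principal.2 (.of_forall (Nat.nth_mem_of_infinite hA))⟩
  exact Nat.cofinite_eq_atTop ▸ (Nat.nth_strictMono hA).tendsto_atTop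

theorem convAlong_range_of_tendsto_comp {φ : ℕ → ℕ} (h : Tendsto (x ∘ φ) atTop (𝓝 l)) :
    ConvAlong (range φ) x l := by
  intro U hU
  obtain ⟨N, hN⟩ := eventually_atTop.1 (h hU)
  refine ((finite_Iio N).image φ).subset ?_
  rintro _ ⟨⟨k, rfl⟩, hk⟩
  exact ⟨k, not_le.1 fun hNk ↦ hk (hN k hNk), rfl⟩

theorem seqCompactSpace_of_forall_convAlong
    (h : ∀ x : ℕ → X, ∃ A : Set ℕ, A.Infinite ∧ ∃ l, ConvAlong A x l) : SeqCompactSpace X where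
  isSeqCompact_univ x _ := by
    obtain ⟨A, hA, l, hl⟩ := h x
    exact ⟨l, mem_univ l, hl.exists_strictMono_tendsto hA⟩

theorem exists_convAlong_subset [SeqCompactSpace X] (hB : B.Infinite) (x : ℕ → X) :
    ∃ A ⊆ B, A.Infinite ∧ ∃ l, ConvAlong A x l := by
  have hψ : StrictMono (Nat.nth (· ∈ B)) := Nat.nth_strictMono hB
  obtain ⟨l, φ, hφ, hl⟩ := SeqCompactSpace.tendsto_subseq (x ∘ Nat.nth (· ∈ B))
  exact ⟨range (Nat.nth (· ∈ B) ∘ φ),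
    range_subset_iff.2 fun k ↦ Nat.nth_mem_of_infinite hB (φ k),
    infinite_range_of_injective (hψ.comp hφ).injective, l, convAlong_range_of_tendsto_comp hl⟩

theorem Homeomorph.seqCompactSpace [SeqCompactSpace X] (e : X ≃ₜ Y) : SeqCompactSpace Y :=
  ⟨by simpa using isSeqCompact_univ.image e.continuous.seqContinuous⟩

variable {I : Set (Set ℕ)}

theorem FinBW.seqCompactSpace (hI : ∀ A : Set ℕ, A.Finite → A ∈ I) (h : FinBW I X) :
    SeqCompactSpace X :=
  seqCompactSpace_of_forall_convAlong fun x ↦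
    let ⟨A, hAI, hA⟩ := h x
    ⟨A, fun hfin ↦ hAI (hI A hfin), hA⟩

theorem finBW_of_seqCompactSpace [SeqCompactSpace X] (hB : B.Infinite)
    (hBI : ∀ C ⊆ B, C ∈ I → C.Finite) : FinBW I X := fun x ↦
  let ⟨A, hAB, hA, hconv⟩ := exists_convAlong_subset hB x
  ⟨A, fun hAI ↦ hA (hBI A hAB hAI), hconv⟩

theorem FinBW.of_homeomorph (e : X ≃ₜ Y) (h : FinBW I Y) : FinBW I X := fun x ↦
  let ⟨A, hAI, l, hl⟩ := h (e ∘ x)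
  ⟨A, hAI, e.symm l, by simpa [Function.comp_def] using hl.map e.symm.continuous⟩

end ConvAlong

def IsAlmostDisjoint (F : Set (Set ℕ)) : Prop :=
  F.Pairwise fun A B ↦ (A ∩ B).Finite

theorem exists_maximal_almostDisjoint_subset {I : Set (Set ℕ)}
    (htall : ∀ A : Set ℕ, A.Infinite → ∃ B ⊆ A, B.Infinite ∧ B ∈ I) :
    ∃ F ⊆ I, IsAlmostDisjoint F ∧ ∀ R : Set ℕ, R.Infinite → ∃ A ∈ F, (R ∩ A).Infinite := by
  obtain ⟨F, ⟨hFI, hAD⟩, hmax⟩ := zorn_subset {F | F ⊆ I ∧ IsAlmostDisjoint F}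
    fun c hc hchain ↦ ⟨⋃₀ c, ⟨sUnion_subset fun F hF ↦ (hc hF).1,
      hchain.pairwise_sUnion.2 fun F hF ↦ (hc hF).2⟩, fun _ ↦ subset_sUnion_of_mem⟩
  refine ⟨F, hFI, hAD, fun R hR ↦ ?_⟩
  by_contra! hRF
  obtain ⟨C, hCR, hC, hCI⟩ := htall R hR
  have hCA : ∀ A ∈ F, (C ∩ A).Finite := fun A hA ↦
    (hRF A hA).subset (inter_subset_inter_left A hCR)
  have hCF : C ∉ F := fun hCF ↦ hC (by simpa using hCA C hCF)
  have hins : insert C F ∈ {F | F ⊆ I ∧ IsAlmostDisjoint F} :=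
    ⟨insert_subset hCI hFI,
      hAD.insert fun A hA _ ↦ ⟨hCA A hA, by simpa [inter_comm] using hCA A hA⟩⟩
  exact hCF (hmax hins (subset_insert C F) (mem_insert C F))

/-- The one-point compactification of Mrówka's space `Ψ(F)`. -/
inductive MrowkaSpace (F : Set (Set ℕ)) : Type
  | nat : ℕ → MrowkaSpace F
  | pt : F → MrowkaSpace F
  | infty : MrowkaSpace F

namespace MrowkaSpace

variable {F : Set (Set ℕ)}

/-- The topology is that of the subspace `{code p}` of the Cantor cube `2^(ω ⊔ F)`, where
`code (nat n) = {n} ∪ {A ∈ F | n ∈ A}`; for an almost disjoint `F` this is the usual topology. -/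
def code : MrowkaSpace F → Set (ℕ ⊕ F)
  | nat n => {i | i.elim (· = n) (n ∈ ·.1)}
  | pt A => {.inr A}
  | infty => ∅

@[simp] theorem inl_mem_code_nat {m n : ℕ} : .inl m ∈ code (nat n : MrowkaSpace F) ↔ m = n :=
  Iff.rfl

@[simp] theorem inr_mem_code_nat {n : ℕ} {A : F} : .inr A ∈ code (nat n) ↔ n ∈ A.1 := Iff.rfl

@[simp] theorem inl_notMem_code_pt {m : ℕ} {A : F} : .inl m ∉ code (pt A) := by simp [code]

@[simp] theorem inr_mem_code_pt {A B : F} : .inr B ∈ code (pt A) ↔ B = A := by simp [code]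

@[simp] theorem code_infty : code (infty : MrowkaSpace F) = ∅ := rfl

theorem code_injective : Function.Injective (code : MrowkaSpace F → Set (ℕ ⊕ F)) := by
  intro p q h
  cases p <;> cases q <;> simp_all [Set.ext_iff]

theorem nat_injective : Function.Injective (nat : ℕ → MrowkaSpace F) := fun _ _ ↦ nat.inj

noncomputable instance : TopologicalSpace (MrowkaSpace F) :=
  .induced (fun p ↦ (code p).indicator fun _ ↦ (1 : ℕ)) inferInstance

theorem isEmbedding_indicator_code :
    IsEmbedding fun p : MrowkaSpace F ↦ (code p).indicator fun _ ↦ (1 : ℕ) :=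
  ⟨.induced _, fun p q h ↦ code_injective <| Set.ext fun i ↦ by
    have := congr_fun h i
    by_cases hp : i ∈ code p <;> by_cases hq : i ∈ code q <;> simp_all⟩

instance : T2Space (MrowkaSpace F) := isEmbedding_indicator_code.t2Space

theorem tendsto_nhds_iff {α : Type*} {l : Filter α} {x : α → MrowkaSpace F}
    {p : MrowkaSpace F} :
    Tendsto x l (𝓝 p) ↔ ∀ i, ∀ᶠ k in l, (i ∈ code (x k) ↔ i ∈ code p) := by
  rw [isEmbedding_indicator_code.tendsto_nhds_iff]
  exact tendsto_indicator_const_iff_forall_eventually _ 1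

theorem convAlong_iff {S : Set ℕ} {x : ℕ → MrowkaSpace F} {p : MrowkaSpace F} :
    ConvAlong S x p ↔ ∀ i, {k ∈ S | ¬ (i ∈ code (x k) ↔ i ∈ code p)}.Finite := by
  simp only [convAlong_iff_tendsto, tendsto_nhds_iff, eventually_cofinite_inf_principal]

theorem convAlong_infty {x : ℕ → MrowkaSpace F} (hfib : ∀ p, (x ⁻¹' {p}).Finite) :
    ConvAlong (x ⁻¹' range pt) x infty := by
  rw [convAlong_iff]
  rintro (m | B)
  · refine finite_empty.subset ?_
    rintro k ⟨⟨A, hA⟩, hk⟩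
    simp [← hA] at hk
  · refine (hfib (pt B)).subset ?_
    rintro k ⟨⟨A, hA⟩, hk⟩
    rw [← hA] at hk
    rw [mem_preimage, ← hA]
    simpa [eq_comm] using hk

theorem exists_convAlong_pt {x : ℕ → MrowkaSpace F} (hfib : ∀ p, (x ⁻¹' {p}).Finite)
    (hAD : IsAlmostDisjoint F) (hMAD : ∀ R : Set ℕ, R.Infinite → ∃ A ∈ F, (R ∩ A).Infinite)
    (hnat : (x ⁻¹' range nat).Infinite) :
    ∃ S : Set ℕ, S.Infinite ∧ ∃ A, ConvAlong S x (pt A) := by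
  have hpre : ∀ T, T.Finite → (x ⁻¹' T).Finite := fun T hT ↦ hT.preimage' fun p _ ↦ hfib p
  have hR : (nat ⁻¹' range x).Infinite := fun hR ↦ hnat <| (hpre _ (hR.image nat)).subset <| by
    rintro k ⟨m, hm⟩
    exact ⟨m, ⟨k, hm.symm⟩, hm⟩
  obtain ⟨A, hAF, hRA⟩ := hMAD _ hR
  refine ⟨x ⁻¹' (nat '' A), fun hS ↦ hRA ?_, ⟨A, hAF⟩, ?_⟩
  · refine ((hS.image x).preimage nat_injective.injOn).subset ?_
    rintro m ⟨⟨k, hk⟩, hmA⟩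
    exact ⟨k, ⟨m, hmA, hk.symm⟩, hk⟩
  rw [convAlong_iff]
  rintro (m | B)
  · refine (hfib (nat m)).subset ?_
    rintro k ⟨⟨n, -, hn⟩, hk⟩
    rw [← hn] at hk
    rw [mem_preimage, ← hn]
    simpa [eq_comm] using hk
  by_cases hBA : B = ⟨A, hAF⟩
  · refine finite_empty.subset ?_
    rintro k ⟨⟨n, hnA, hn⟩, hk⟩
    rw [← hn, hBA] at hk
    simp [hnA] at hk
  · refine (hpre _ ((hAD hAF B.2 fun h ↦ hBA (Subtype.ext h.symm)).image nat)).subset ?_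
    rintro k ⟨⟨n, hnA, hn⟩, hk⟩
    rw [← hn] at hk
    exact ⟨n, ⟨hnA, by simpa [hBA] using hk⟩, hn⟩

theorem seqCompactSpace (hAD : IsAlmostDisjoint F)
    (hMAD : ∀ R : Set ℕ, R.Infinite → ∃ A ∈ F, (R ∩ A).Infinite) :
    SeqCompactSpace (MrowkaSpace F) := by
  refine seqCompactSpace_of_forall_convAlong fun x ↦ ?_
  by_cases hfib : ∃ p, (x ⁻¹' {p}).Infinite
  · obtain ⟨p, hp⟩ := hfib
    exact ⟨_, hp, p, convAlong_of_eqOn fun k hk ↦ hk⟩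
  simp only [not_exists, Set.not_infinite] at hfib
  by_cases hnat : (x ⁻¹' range nat).Infinite
  · obtain ⟨S, hS, A, hA⟩ := exists_convAlong_pt hfib hAD hMAD hnat
    exact ⟨S, hS, _, hA⟩
  refine ⟨x ⁻¹' range pt, fun hpt ↦ infinite_univ (α := ℕ) ?_, infty, convAlong_infty hfib⟩
  refine ((Set.not_infinite.1 hnat).union (hpt.union (hfib infty))).subset fun k _ ↦ ?_
  cases h : x k <;> simp [h]

theorem not_finBW {I : Set (Set ℕ)} (hI : IsIdeal I) (hFI : F ⊆ I)
    (hMAD : ∀ R : Set ℕ, R.Infinite → ∃ A ∈ F, (R ∩ A).Infinite) :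
    ¬ FinBW I (MrowkaSpace F) := by
  intro h
  obtain ⟨S, hSI, p, hp⟩ := h nat
  have hS : S.Infinite := fun hfin ↦ hSI (hI.1 S hfin)
  rw [convAlong_iff] at hp
  cases p with
  | nat m =>
    refine hS (((hp (.inl m)).union (finite_singleton m)).subset fun k hk ↦ ?_)
    by_cases hkm : k = m
    · exact .inr hkm
    · exact .inl ⟨hk, by simpa using Ne.symm hkm⟩
  | pt A =>
    have hSA : S ⊆ A.1 ∪ {k ∈ S | ¬ (.inr A ∈ code (nat k) ↔ .inr A ∈ code (pt A))} :=
      fun k hk ↦ by by_cases hkA : k ∈ A.1 <;> simp_all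
    exact hSI (hI.2.1 _ _ (hI.2.2.1 _ _ (hFI A.2) (hI.1 _ (hp (.inr A)))) hSA)
  | infty =>
    obtain ⟨A, hAF, hSA⟩ := hMAD S hS
    exact hSA ((hp (.inr ⟨A, hAF⟩)).subset fun k hk ↦ by simpa using hk)

end MrowkaSpace

theorem stmt_19 (I : Set (Set ℕ)) (hI : IsIdeal I) :
    ((¬ ∀ A : Set ℕ, A.Infinite → ∃ B ⊆ A, B.Infinite ∧ B ∈ I) ↔
      ∀ (X : Type u) [TopologicalSpace X] [T2Space X], (FinBW I X ↔ SeqCompactSpace X)) ∧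
    ((∃ B : Set ℕ, B.Infinite ∧ ∀ C ⊆ B, C ∈ I → C.Finite) →
      ∀ (X : Type u) [TopologicalSpace X] [T2Space X] [SeqCompactSpace X], FinBW I X) := by
  have hfinBW : (∃ B : Set ℕ, B.Infinite ∧ ∀ C ⊆ B, C ∈ I → C.Finite) →
      ∀ (X : Type u) [TopologicalSpace X] [T2Space X] [SeqCompactSpace X], FinBW I X :=
    fun ⟨B, hB, hBI⟩ X _ _ _ ↦ finBW_of_seqCompactSpace hB hBI
  refine ⟨⟨fun hnt X _ _ ↦ ⟨(·.seqCompactSpace hI.1), fun _ ↦ hfinBW ?_ X⟩, fun h htall ↦ ?_⟩,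
    hfinBW⟩
  · push Not at hnt
    obtain ⟨B, hB, hBI⟩ := hnt
    exact ⟨B, hB, fun C hCB hCI ↦ Set.not_infinite.1 fun hC ↦ hBI C hCB hC hCI⟩
  · obtain ⟨F, hFI, hAD, hMAD⟩ := exists_maximal_almostDisjoint_subset htall
    have := MrowkaSpace.seqCompactSpace hAD hMAD
    have := (Homeomorph.ulift.{u} (X := MrowkaSpace F)).symm.seqCompactSpace
    exact MrowkaSpace.not_finBW hI hFI hMAD <|
      ((h (ULift (MrowkaSpace F))).2 ‹_›).of_homeomorph Homeomorph.ulift.symm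
end
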